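/- With Pecker's polynomials P_m as defined recursively, for all nonnegative reals y₁,...,y_m and any real root t of the univariate polynomial P_m(y₁,...,y_m, ·), the sharper bounds (1 − √((m−1)/m))·Σy_i ≤ t ≤ (1 + √((m−1)/m))·Σy_i hold. -/

import Mathlib

noncomputable def pecker : (m : ℕ) → (Fin (m + 1) → ℝ) → ℝ → ℝ
  | 0, y, t => t - y 0
  | m + 1, y, t =>
      pecker m
        (fun k : Fin (m + 1) =>
          y k.succ * ∑ i : Fin (k.1 + 1), y ⟨i.1, by have := i.isLt; have := k.isLt; omega⟩)
        ((t - ∑ i, y i) ^ 2)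

noncomputable def peckerA : (m : ℕ) → (Fin (m + 1) → ℝ) → ℝ
  | 0, y => y 0
  | m + 1, y =>
      peckerA m
        (fun k : Fin (m + 1) =>
          y k.succ * ∑ i : Fin (k.1 + 1), y ⟨i.1, by have := i.isLt; have := k.isLt; omega⟩)

/-!
Put `S = Σ yᵢ`, `A = Σₖ aₖ = Σ_{i<j} yᵢ yⱼ` and `u = (t - S)²`. The recursion says that `u` is a root
of `P_{m-1}(a, ·)` with `a ≥ 0`, so by induction `(u - A)² ≤ A²`, i.e. `u ≤ 2A = S² - Σ yᵢ²`, and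
Cauchy–Schwarz `S² ≤ (m+1) Σ yᵢ²` turns this into `(t - S)² ≤ m/(m+1) · S²`.
-/

/-- Pecker's `a_k`, indexed from `0`: `peckerShift y k = y_{k+1} (y_0 + ⋯ + y_k)`. -/
noncomputable def peckerShift {n : ℕ} (y : Fin (n + 1) → ℝ) (k : Fin n) : ℝ :=
  y k.succ * ∑ i : Fin (k.1 + 1), y ⟨i.1, by have := i.isLt; have := k.isLt; omega⟩

lemma pecker_succ (m : ℕ) (y : Fin (m + 2) → ℝ) (t : ℝ) :
    pecker (m + 1) y t = pecker m (peckerShift y) ((t - ∑ i, y i) ^ 2) :=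
  rfl

lemma peckerShift_nonneg {n : ℕ} {y : Fin (n + 1) → ℝ} (hy : ∀ i, 0 ≤ y i) (k : Fin n) :
    0 ≤ peckerShift y k :=
  mul_nonneg (hy _) (Finset.sum_nonneg fun _ _ => hy _)

lemma sq_sum_eq_sum_sq_add_two_mul_sum_peckerShift {n : ℕ} (y : Fin (n + 1) → ℝ) :
    (∑ i, y i) ^ 2 = ∑ i, y i ^ 2 + 2 * ∑ k, peckerShift y k := by
  induction n with
  | zero => simp
  | succ n ih =>
    have hlast : ∑ i : Fin (n + 1), y ⟨i.1, by omega⟩ = ∑ i, y (Fin.castSucc i) := rfl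
    have hshift : ∀ k : Fin n, peckerShift y k.castSucc = peckerShift (y ∘ Fin.castSucc) k :=
      fun _ => rfl
    rw [Fin.sum_univ_castSucc y, Fin.sum_univ_castSucc (y · ^ 2),
      Fin.sum_univ_castSucc (peckerShift y), peckerShift, Fin.succ_last]
    simp only [Fin.val_last, hlast, hshift]
    have hinit := ih (y ∘ Fin.castSucc)
    simp only [Function.comp_apply] at hinit
    rw [add_sq, hinit]
    ring

lemma two_mul_sum_peckerShift_le {n : ℕ} (y : Fin (n + 1) → ℝ) :
    2 * ∑ k, peckerShift y k ≤ (n / (n + 1) : ℝ) * (∑ i, y i) ^ 2 := by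
  have hcs := sq_sum_le_card_mul_sum_sq (s := Finset.univ) (f := y)
  rw [Finset.card_univ, Fintype.card_fin] at hcs
  push_cast at hcs
  rw [sq_sum_eq_sum_sq_add_two_mul_sum_peckerShift] at hcs ⊢
  rw [div_mul_eq_mul_div, le_div_iff₀ (by positivity)]
  nlinarith

theorem sq_sub_sum_le_of_pecker_eq_zero (m : ℕ) {y : Fin (m + 1) → ℝ} (hy : ∀ i, 0 ≤ y i)
    {t : ℝ} (ht : pecker m y t = 0) :
    (t - ∑ i, y i) ^ 2 ≤ (m / (m + 1) : ℝ) * (∑ i, y i) ^ 2 := by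
  induction m generalizing t with
  | zero =>
    simp only [pecker, sub_eq_zero] at ht
    simp [ht]
  | succ m ih =>
    rw [pecker_succ] at ht
    set A := ∑ k, peckerShift y k
    have hA : 0 ≤ A := Finset.sum_nonneg fun k _ => peckerShift_nonneg hy k
    have hIH : ((t - ∑ i, y i) ^ 2 - A) ^ 2 ≤ A ^ 2 :=
      (ih (peckerShift_nonneg hy) ht).trans <|
        mul_le_of_le_one_left (sq_nonneg A) <| div_le_one_of_le₀ (by linarith) (by positivity)
    calc (t - ∑ i, y i) ^ 2 ≤ 2 * A := by linarith [le_of_sq_le_sq hIH hA]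
      _ ≤ _ := two_mul_sum_peckerShift_le y
      _ = _ := by push_cast; ring

theorem stmt14 (m : ℕ) (y : Fin (m + 1) → ℝ) (hy : ∀ i, 0 ≤ y i) (t : ℝ)
    (ht : pecker m y t = 0) :
    (1 - Real.sqrt ((m : ℝ) / (m + 1))) * ∑ i, y i ≤ t ∧
      t ≤ (1 + Real.sqrt ((m : ℝ) / (m + 1))) * ∑ i, y i := by
  have hS : 0 ≤ ∑ i, y i := Finset.sum_nonneg fun i _ => hy i
  have habs := Real.abs_le_sqrt (sq_sub_sum_le_of_pecker_eq_zero m hy ht)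
  rw [Real.sqrt_mul (by positivity), Real.sqrt_sq hS, abs_le] at habs
  constructor <;> linarith
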